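/- Let n ≥ 2 and r, s positive integers with r | s, s | n. The multiple (lcm(rs,n)/n)·(−,−) of the standard scalar product is even on the lattice Λ_r = Q(A_{n−1}^∨) + ⟨(n/r)ω_1⟩ if and only if it is NOT the case that v_2(r) = v_2(s) ≥ v_2(n)/2 > 0, where v_2 denotes the 2-adic valuation. Equivalently, the index of the even-forms lattice inside the sc-even-forms lattice (both rank one) is 2 exactly when v_2(r) = v_2(s) ≥ v_2(n)/2 > 0, and 1 otherwise. -/

import Mathlib

/-!
Write `x ∈ Λ_r` as `a + k v` with `v = (n/r) ω_1` and `a` an integer vector of coordinate sum `0`.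
Then `c (x, x) = c (a, a) + 2k c (a, v) + k² c (v, v)` for `c = lcm(rs, n)/n`. The first term is
even because `Σ aᵢ² ≡ Σ aᵢ = 0 (mod 2)`, the second because `c (a, v) = (lcm(rs, n)/r) a_1` is an
integer, so evenness on `Λ_r` is decided by `c (v, v) = (lcm(rs, n)/r²)(n − 1)`, whose parity is
read off from 2-adic valuations.
-/

/-- The `i`-th standard basis vector `ε_i` of `ℚ^n`. -/
def stdBasisQ (n : ℕ) (i : Fin n) : Fin n → ℚ := fun k => if k = i then 1 else 0

/-- The coroot lattice `Q(A_{n−1}^∨)`, generated by the elements `ε_i − ε_j`. -/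
def rootLatticeA (n : ℕ) : Submodule ℤ (Fin n → ℚ) :=
  Submodule.span ℤ {v : Fin n → ℚ | ∃ i j : Fin n, v = stdBasisQ n i - stdBasisQ n j}

/-- The fundamental coweight `ω_1 = ε_1 − (Σ_i ε_i)/n`. -/
def omegaOne (n : ℕ) : Fin n → ℚ := fun k => (if (k : ℕ) = 0 then 1 else 0) - 1 / n

/-- `Λ_r = Q(A_{n−1}^∨) + ⟨(n/r)ω_1⟩`, the cocharacter lattice of the maximal torus of
`SL_n/μ_r`. -/
def latticeSL (n r : ℕ) : Submodule ℤ (Fin n → ℚ) :=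
  rootLatticeA n ⊔ Submodule.span ℤ {((n : ℚ) / r) • omegaOne n}

theorem padicValNat_lcm (p : ℕ) [hp : Fact p.Prime] {a b : ℕ} (ha : a ≠ 0) (hb : b ≠ 0) :
    padicValNat p (a.lcm b) = max (padicValNat p a) (padicValNat p b) := by
  simp only [← Nat.factorization_def _ hp.out, Nat.factorization_lcm ha hb, Finsupp.sup_apply]

theorem padicValNat_le_of_dvd (p : ℕ) [Fact p.Prime] {a b : ℕ} (hb : b ≠ 0) (h : a ∣ b) :
    padicValNat p a ≤ padicValNat p b := by
  obtain ⟨c, rfl⟩ := h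
  rw [padicValNat.mul (left_ne_zero_of_mul hb) (right_ne_zero_of_mul hb)]
  omega

theorem Nat.odd_iff_padicValNat_two_eq_zero {m : ℕ} (hm : m ≠ 0) :
    Odd m ↔ padicValNat 2 m = 0 := by
  simp [padicValNat.eq_zero_iff, hm, Nat.odd_iff, Nat.two_dvd_ne_zero]

theorem odd_lcm_div_mul_self_mul_pred_iff {n r s : ℕ} (hn : n ≠ 0) (hr : r ≠ 0) (hrs : r ∣ s)
    (hsn : s ∣ n) :
    Odd (Nat.lcm (r * s) n / (r * r) * (n - 1)) ↔
      (padicValNat 2 r = padicValNat 2 s ∧ padicValNat 2 n ≤ 2 * padicValNat 2 r ∧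
        0 < padicValNat 2 n) := by
  have hs : s ≠ 0 := ne_zero_of_dvd_ne_zero hn hsn
  have hL : Nat.lcm (r * s) n ≠ 0 := Nat.lcm_ne_zero (mul_ne_zero hr hs) hn
  obtain ⟨M, hM⟩ : r * r ∣ Nat.lcm (r * s) n :=
    (Nat.mul_dvd_mul_left r hrs).trans (Nat.dvd_lcm_left _ _)
  have hM0 : M ≠ 0 := right_ne_zero_of_mul (hM ▸ hL)
  have hvL := padicValNat_lcm 2 (mul_ne_zero hr hs) hn
  rw [hM, padicValNat.mul (mul_ne_zero hr hr) hM0, padicValNat.mul hr hr,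
    padicValNat.mul hr hs] at hvL
  have hvrs := padicValNat_le_of_dvd 2 hs hrs
  rw [hM, Nat.mul_div_cancel_left _ (by positivity), Nat.odd_mul,
    Nat.odd_sub (Nat.one_le_iff_ne_zero.mpr hn), Nat.odd_iff_padicValNat_two_eq_zero hn,
    Nat.odd_iff_padicValNat_two_eq_zero hM0]
  simp only [Nat.not_even_one, iff_false]
  omega

theorem Int.even_sum_mul_self_iff {ι : Type*} (s : Finset ι) (f : ι → ℤ) :
    Even (∑ i ∈ s, f i * f i) ↔ Even (∑ i ∈ s, f i) := by
  simp only [← ZMod.intCast_eq_zero_iff_even, Int.cast_sum, ← sq, Int.cast_pow, ZMod.pow_card]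

theorem Nat.even_iff_exists_cast_eq_two_mul {k : ℕ} : Even k ↔ ∃ m : ℤ, (k : ℚ) = 2 * m := by
  rw [← Int.even_coe_nat, even_iff_exists_two_mul]
  exact exists_congr fun m => by norm_cast

def IsEvenForm {ι : Type*} [Fintype ι] (c : ℚ) (Λ : Submodule ℤ (ι → ℚ)) : Prop :=
  ∀ x ∈ Λ, ∃ m : ℤ, c * (x ⬝ᵥ x) = 2 * m

theorem isEvenForm_sup_span_singleton_iff {ι : Type*} [Fintype ι] {c : ℚ}
    {A : Submodule ℤ (ι → ℚ)} {v : ι → ℚ} (hA : IsEvenForm c A)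
    (hAv : ∀ a ∈ A, ∃ z : ℤ, c * (a ⬝ᵥ v) = z) :
    IsEvenForm c (A ⊔ Submodule.span ℤ {v}) ↔ ∃ m : ℤ, c * (v ⬝ᵥ v) = 2 * m := by
  refine ⟨fun h => h v (Submodule.mem_sup_right (Submodule.mem_span_singleton_self v)), ?_⟩
  rintro ⟨m, hm⟩ x hx
  obtain ⟨a, ha, _, hkv, rfl⟩ := Submodule.mem_sup.mp hx
  obtain ⟨k, rfl⟩ := Submodule.mem_span_singleton.mp hkv
  obtain ⟨ma, hma⟩ := hA a ha
  obtain ⟨z, hz⟩ := hAv a ha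
  have expand : (a + k • v) ⬝ᵥ (a + k • v) = a ⬝ᵥ a + 2 * k * (a ⬝ᵥ v) + k ^ 2 * (v ⬝ᵥ v) := by
    simp only [add_dotProduct, dotProduct_add, smul_dotProduct, dotProduct_smul,
      dotProduct_comm v a]
    simp only [zsmul_eq_mul]
    ring
  refine ⟨ma + k * z + k ^ 2 * m, ?_⟩
  push_cast
  linear_combination expand * c + hma + 2 * k * hz + k ^ 2 * hm

theorem exists_intCast_eq_of_mem_rootLatticeA {n : ℕ} {a : Fin n → ℚ} (ha : a ∈ rootLatticeA n) :
    ∃ f : Fin n → ℤ, ∑ i, f i = 0 ∧ a = fun i => (f i : ℚ) := by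
  induction ha using Submodule.span_induction with
  | mem v hv =>
    obtain ⟨i, j, rfl⟩ := hv
    refine ⟨Pi.single i 1 - Pi.single j 1, by simp, ?_⟩
    ext k
    simp [stdBasisQ, Pi.single_apply]
  | zero => exact ⟨0, by simp, by ext; simp⟩
  | add u v _ _ hu hv =>
    obtain ⟨f, hf, rfl⟩ := hu
    obtain ⟨g, hg, rfl⟩ := hv
    exact ⟨f + g, by simp [Finset.sum_add_distrib, hf, hg], by ext; simp⟩
  | smul z v _ hv =>
    obtain ⟨f, hf, rfl⟩ := hv
    exact ⟨z • f, by simp [← Finset.mul_sum, hf], by ext; simp⟩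

theorem isEvenForm_rootLatticeA (n c : ℕ) : IsEvenForm c (rootLatticeA n) := by
  intro a ha
  obtain ⟨f, hf, rfl⟩ := exists_intCast_eq_of_mem_rootLatticeA ha
  obtain ⟨m, hm⟩ := (Int.even_sum_mul_self_iff Finset.univ f).mpr (hf ▸ Even.zero)
  refine ⟨c * m, ?_⟩
  have hm' : ∑ i, (f i : ℚ) * f i = 2 * m := by
    simpa [← two_mul] using congrArg (Int.cast : ℤ → ℚ) hm
  rw [dotProduct, hm']
  push_cast
  ring

theorem sum_omegaOne (n : ℕ) [NeZero n] : ∑ i, omegaOne n i = 0 := by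
  simp [omegaOne, Finset.sum_sub_distrib, Fin.val_eq_zero_iff]

theorem dotProduct_omegaOne {n : ℕ} [NeZero n] (x : Fin n → ℚ) :
    x ⬝ᵥ omegaOne n = x 0 - (∑ i, x i) / n := by
  simp [dotProduct, omegaOne, mul_sub, Finset.sum_sub_distrib, Finset.sum_mul, div_eq_mul_inv,
    Fin.val_eq_zero_iff]

theorem omegaOne_dotProduct_self (n : ℕ) [NeZero n] : omegaOne n ⬝ᵥ omegaOne n = 1 - 1 / n := by
  rw [dotProduct_omegaOne, sum_omegaOne]
  simp [omegaOne]

theorem exists_intCast_eq_dotProduct_omegaOne {n : ℕ} [NeZero n] {a : Fin n → ℚ}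
    (ha : a ∈ rootLatticeA n) : ∃ z : ℤ, a ⬝ᵥ omegaOne n = z := by
  obtain ⟨f, hf, rfl⟩ := exists_intCast_eq_of_mem_rootLatticeA ha
  refine ⟨f 0, ?_⟩
  simp [dotProduct_omegaOne, ← Int.cast_sum, hf]

theorem isEvenForm_latticeSL_iff {n r c : ℕ} [NeZero n] (hr : r ≠ 0) (hcr : r ∣ c * n) :
    IsEvenForm c (latticeSL n r) ↔ ∃ m : ℤ, (c * n * (n - 1) / r ^ 2 : ℚ) = 2 * m := by
  obtain ⟨q, hq⟩ := hcr
  have hq' : (c * n : ℚ) = r * q := by exact_mod_cast hq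
  refine (isEvenForm_sup_span_singleton_iff (isEvenForm_rootLatticeA n c) fun a ha => ?_).trans ?_
  · obtain ⟨z, hz⟩ := exists_intCast_eq_dotProduct_omegaOne ha
    refine ⟨q * z, ?_⟩
    rw [dotProduct_smul, smul_eq_mul, hz]
    field_simp
    push_cast
    linear_combination z * hq'
  · have hv : (c : ℚ) * (((n : ℚ) / r) • omegaOne n ⬝ᵥ ((n : ℚ) / r) • omegaOne n) =
        c * n * (n - 1) / r ^ 2 := by
      have hn : (n : ℚ) ≠ 0 := NeZero.ne _
      rw [smul_dotProduct, dotProduct_smul, smul_eq_mul, smul_eq_mul, omegaOne_dotProduct_self]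
      field_simp
    rw [hv]

/-- For `r | s | n`, the form `(lcm(rs,n)/n)·(−,−)` is even on
`Λ_r = Q(A_{n−1}^∨) + ⟨(n/r)ω_1⟩` if and only if it is NOT the case that
`v_2(r) = v_2(s) ≥ v_2(n)/2 > 0`, where `v_2` is the 2-adic valuation. -/
theorem stmt10 (n r s : ℕ) (hn : 2 ≤ n) (hr : 0 < r) (hrs : r ∣ s) (hsn : s ∣ n) :
    (∀ x ∈ latticeSL n r,
        ∃ m : ℤ, ((Nat.lcm (r * s) n / n : ℕ) : ℚ) * ∑ i, x i * x i = 2 * (m : ℚ)) ↔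
      ¬ (padicValNat 2 r = padicValNat 2 s ∧ padicValNat 2 n ≤ 2 * padicValNat 2 r ∧
          0 < padicValNat 2 n) := by
  have : NeZero n := ⟨by omega⟩
  have hcn : Nat.lcm (r * s) n / n * n = Nat.lcm (r * s) n :=
    Nat.div_mul_cancel (Nat.dvd_lcm_right _ _)
  obtain ⟨t, ht⟩ : r * r ∣ Nat.lcm (r * s) n :=
    (Nat.mul_dvd_mul_left r hrs).trans (Nat.dvd_lcm_left _ _)
  have hform : ((Nat.lcm (r * s) n / n : ℕ) * n * (n - 1) / r ^ 2 : ℚ) =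
      (Nat.lcm (r * s) n / (r * r) * (n - 1) : ℕ) := by
    rw [← Nat.cast_mul, hcn, ht, Nat.mul_div_cancel_left _ (by positivity)]
    push_cast [Nat.cast_pred (by omega : 0 < n)]
    field_simp
  refine (isEvenForm_latticeSL_iff hr.ne' ⟨r * t, ?_⟩).trans ?_
  · rw [hcn, ht]
    ring
  · rw [hform, ← Nat.even_iff_exists_cast_eq_two_mul, ← Nat.not_odd_iff_even,
      odd_lcm_div_mul_self_mul_pred_iff (by omega) hr.ne' hrs hsn]
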